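/- Let K be a full subcategory of Top₀ closed under homeomorphisms such that K ⊄ Top₁. Then K is reflective in Top₀ if and only if K satisfies the Keimel–Lawson conditions: (K1) K contains all sober spaces; (K3) if {X_i : i ∈ I} is a family of subsets of a sober space Z such that each subspace X_i belongs to K, then the subspace ⋂_{i∈I} X_i belongs to K; and (K4) if f : X → Y is a continuous map between sober spaces and Y₁ ⊆ Y is a subset whose subspace belongs to K, then the subspace f⁻¹(Y₁) belongs to K. -/

import Mathlib

open TopologicalSpace

/-- The b-topology associated with a topological space `(X, t)`: the topology with base
`{U ∩ cl({x}) : x ∈ U, U open}`. -/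
def bTop (X : Type) (t : TopologicalSpace X) : TopologicalSpace X :=
  TopologicalSpace.generateFrom
    {s | ∃ (U : Set X) (x : X), @IsOpen X t U ∧ x ∈ U ∧ s = U ∩ @closure X t {x}}

/-- The specialization order of `(X, t)`: `x ≤ y` iff `x ∈ cl({y})`. -/
def specLE {X : Type} (t : TopologicalSpace X) (x y : X) : Prop :=
  x ∈ @closure X t {y}

/-- The subspace topology on a subset. -/
def subTop {X : Type} (t : TopologicalSpace X) (A : Set X) : TopologicalSpace A :=
  TopologicalSpace.induced Subtype.val t

/-- A class of topological spaces, viewed as the object class of a full subcategory of Top. -/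
abbrev SpaceClass : Type 1 := (X : Type) → TopologicalSpace X → Prop

/-- All members of `K` are T₀ (i.e. `K` is a subcategory of `Top₀`). -/
def AllT0 (K : SpaceClass) : Prop := ∀ X t, K X t → @T0Space X t

/-- `K` is closed under homeomorphisms. -/
def ClosedUnderHomeo (K : SpaceClass) : Prop :=
  ∀ (X Y : Type) (tX : TopologicalSpace X) (tY : TopologicalSpace Y),
    K X tX → Nonempty (@Homeomorph X Y tX tY) → K Y tY

/-- `K ⊄ Top₁`: `K` contains a space that is not T₁. -/
def NotSubT1 (K : SpaceClass) : Prop := ∃ X t, K X t ∧ ¬ @T1Space X t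

/-- `μ : X → Xk` is a K-reflection for `X`: `Xk ∈ K`, `μ` is continuous and every continuous map
from `X` to a member of `K` factors uniquely (continuously) through `μ`. -/
def IsReflection (K : SpaceClass) {X Xk : Type} (tX : TopologicalSpace X)
    (tk : TopologicalSpace Xk) (μ : X → Xk) : Prop :=
  K Xk tk ∧ @Continuous X Xk tX tk μ ∧
    ∀ (Z : Type) (tZ : TopologicalSpace Z), K Z tZ →
      ∀ f : X → Z, @Continuous X Z tX tZ f →
        ∃! g : Xk → Z, @Continuous Xk Z tk tZ g ∧ g ∘ μ = f

/-- `K` is reflective in `Top₀`: every T₀ space admits a K-reflection. -/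
def IsReflective (K : SpaceClass) : Prop :=
  ∀ (X : Type) (tX : TopologicalSpace X), @T0Space X tX →
    ∃ (Xk : Type) (tk : TopologicalSpace Xk) (μ : X → Xk), IsReflection K tX tk μ

/-- `K` is b-closed-hereditary. -/
def BClosedHereditary (K : SpaceClass) : Prop :=
  ∀ (X : Type) (tX : TopologicalSpace X) (A : Set X),
    K X tX → @IsClosed X (bTop X tX) A → K A (subTop tX A)

/-- `K` is productive. -/
def Productive (K : SpaceClass) : Prop :=
  ∀ (I : Type) (X : I → Type) (t : ∀ i, TopologicalSpace (X i)),
    (∀ i, K (X i) (t i)) → K (∀ i, X i) (@Pi.topologicalSpace I X t)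

/-- `K` has equalizers. -/
def HasEqualizers (K : SpaceClass) : Prop :=
  ∀ (X Y : Type) (tX : TopologicalSpace X) (tY : TopologicalSpace Y),
    K X tX → K Y tY → ∀ f g : X → Y, @Continuous X Y tX tY f → @Continuous X Y tX tY g →
      K {x | f x = g x} (subTop tX {x | f x = g x})

/-- `(X, t)` is sober: T₀ and every irreducible closed set is the closure of a point. -/
def Sober (X : Type) (t : TopologicalSpace X) : Prop := @T0Space X t ∧ @QuasiSober X t

/-!
Forward direction: if a reflection `μ : X → X^k` has a continuous retraction `X^k → X`, then
`X ≃ₜ X^k` lies in `K`. Hence `K` is closed under retracts, products and equalizers, and a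
subspace `A` of a member `Z` lies in `K` as soon as the extension `A^k → Z` of the inclusion
takes values in `A`; uniqueness of extensions gives this for intersections (K3) and preimages
(K4). A non-T₁ T₀ space retracts onto the Sierpiński space, and a sober space `X` is the
equalizer, in the Sierpiński power indexed by `Opens X`, of the equations saying that a family
of truth values is a completely prime filter; this gives (K1).

Backward direction: embed `X` into the sober space `Opens X → Prop` and let `X^k` be the
intersection of all members of `K` containing the image of `X`, a member of `K` by (K3). A map
`f : X → Z` into a member of `K` induces a map of Sierpiński powers; by (K4) the preimage of the
copy of `Z` is one of the sets intersected, so `f` extends to `X^k`. Since b-closed subspaces of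
sober spaces are sober, (K1) puts `X^k` inside the b-closure of `X`, and continuous maps into a
T₀ space are determined by their values on a b-dense set.
-/

open Set Topology

theorem prop_specializes_iff {p q : Prop} : p ⤳ q ↔ (q → p) := by
  refine ⟨fun h hq => ?_, fun h => ?_⟩
  · simpa using specializes_iff_forall_open.1 h {True} isOpen_singleton_true (by simpa using hq)
  · by_cases hq : q
    · rw [eq_true hq, eq_true (h hq)]
    · rw [eq_false hq, specializes_iff_nhds, nhds_false]
      exact le_top

instance quasiSober_pi_prop (ι : Type*) : QuasiSober (ι → Prop) := by
  refine ⟨fun {C} hC hCc => ?_⟩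
  -- the pointwise supremum of `C` is its generic point
  set G : ι → Prop := fun i => ∃ c ∈ C, c i
  have hGC : G ∈ C := by
    rw [← hCc.closure_eq, mem_closure_iff]
    intro U hU hGU
    obtain ⟨I, u, hu, hIu⟩ := isOpen_pi_iff.1 hU G hGU
    classical
    have hopen : ∀ i, IsOpen {F : ι → Prop | F i} := fun i =>
      continuous_Prop.1 (continuous_apply i)
    obtain ⟨F, hFC, hFI⟩ := isIrreducible_iff_sInter.1 hC
      ((I.filter G).image fun i => {F | F i})
      (by simp only [Finset.mem_image]; rintro _ ⟨i, -, rfl⟩; exact hopen i)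
      (by
        simp only [Finset.mem_image, Finset.mem_filter]
        rintro _ ⟨i, ⟨-, c, hc, hci⟩, rfl⟩
        exact ⟨c, hc, hci⟩)
    refine ⟨F, hIu fun i hi => ?_, hFC⟩
    have hFG : F i ⤳ G i := prop_specializes_iff.2 fun hGi => by
      simpa using hFI {F | F i} (by simpa using ⟨i, ⟨hi, hGi⟩, rfl⟩)
    exact specializes_iff_forall_open.1 hFG _ (hu i hi).1 (hu i hi).2
  refine ⟨G, (closure_minimal (singleton_subset_iff.2 hGC) hCc).antisymm fun c hc => ?_⟩
  exact specializes_iff_mem_closure.1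
    (specializes_pi.2 fun i => prop_specializes_iff.2 fun hci => ⟨c, hc, hci⟩)

theorem sober_pi_prop (ι : Type) : Sober (ι → Prop) inferInstance :=
  ⟨inferInstance, inferInstance⟩

open Classical in
theorem continuous_ite_of_specializes {X : Type} [TopologicalSpace X] {x y : X} (h : x ⤳ y) :
    Continuous fun p : Prop => if p then x else y := by
  refine continuous_iff_continuousAt.2 fun p => ?_
  by_cases hp : p
  · simp only [ContinuousAt, eq_true hp, nhds_true, if_true]
    exact Filter.tendsto_pure_left.2 fun s hs => by simpa using mem_of_mem_nhds hs
  · simp only [ContinuousAt, eq_false hp, nhds_false, if_false]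
    intro s hs
    simp only [Filter.mem_map, Filter.mem_top, eq_univ_iff_forall, mem_preimage]
    intro q
    split_ifs
    exacts [mem_of_mem_nhds (h hs), mem_of_mem_nhds hs]

section FramePoints

variable (L : Type*)

def infSupApply (F : L → Prop) : Finset L ⊕ Set L → Prop
  | .inl s => ∀ a ∈ s, F a
  | .inr S => ∃ a ∈ S, F a

theorem continuous_infSupApply : Continuous (infSupApply L) := by
  refine continuous_pi fun j => continuous_Prop.2 ?_
  cases j with
  | inl s =>
    have h : {F : L → Prop | ∀ a ∈ s, F a} = ⋂ a ∈ s, {F | F a} := by ext; simp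
    exact h ▸ isOpen_biInter_finset fun a _ => continuous_Prop.1 (continuous_apply a)
  | inr S =>
    have h : {F : L → Prop | ∃ a ∈ S, F a} = ⋃ a ∈ S, {F | F a} := by ext; simp
    exact h ▸ isOpen_biUnion fun a _ => continuous_Prop.1 (continuous_apply a)

variable [CompleteLattice L]

def applyInfSup (F : L → Prop) : Finset L ⊕ Set L → Prop
  | .inl s => F (s.inf id)
  | .inr S => F (sSup S)

/-- The frame homomorphisms `L → Prop` (the completely prime filters of `L`), cut out of the
Sierpiński power as an equalizer. -/
def framePoints : Set (L → Prop) := {F | applyInfSup L F = infSupApply L F}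

theorem continuous_applyInfSup : Continuous (applyInfSup L) :=
  continuous_pi fun j => by cases j <;> exact continuous_apply _

variable {L}

theorem mem_framePoints_iff {F : L → Prop} : F ∈ framePoints L ↔
    (∀ s : Finset L, F (s.inf id) ↔ ∀ a ∈ s, F a) ∧ ∀ S : Set L, F (sSup S) ↔ ∃ a ∈ S, F a := by
  refine ⟨fun h => ⟨fun s => iff_of_eq (congrFun h (.inl s)),
    fun S => iff_of_eq (congrFun h (.inr S))⟩, fun ⟨hinf, hsup⟩ => funext fun j => ?_⟩
  cases j with
  | inl s => exact propext (hinf s)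
  | inr S => exact propext (hsup S)

end FramePoints

section SoberAsFramePoints

variable (X : Type*) [TopologicalSpace X]

theorem productOfMemOpens_mem_framePoints (x : X) :
    productOfMemOpens X x ∈ framePoints (Opens X) := by
  refine mem_framePoints_iff.2 ⟨fun s => ?_, fun S => Opens.mem_sSup⟩
  simp [productOfMemOpens, ← SetLike.mem_coe, Opens.coe_finset_inf]

theorem exists_productOfMemOpens_eq [QuasiSober X] {F : Opens X → Prop}
    (hF : F ∈ framePoints (Opens X)) : ∃ x, productOfMemOpens X x = F := by
  classical
  obtain ⟨hinf, hsup⟩ := mem_framePoints_iff.1 hF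
  set D : Opens X := sSup {U | ¬ F U}
  have hFD : ¬ F D := fun h => by
    obtain ⟨U, hU, hFU⟩ := (hsup _).1 h
    exact hU hFU
  have hmono : ∀ {U V : Opens X}, U ≤ V → F U → F V := fun {U V} hUV hU => by
    simpa [sSup_pair, sup_eq_right.2 hUV] using (hsup {U, V}).2 ⟨U, by simp, hU⟩
  have hkey : ∀ U : Opens X, F U ↔ ((D : Set X)ᶜ ∩ U).Nonempty := by
    intro U
    have : ¬ F U ↔ U ≤ D := ⟨fun h => le_sSup h, fun h hU => hFD (hmono h hU)⟩
    rw [← not_iff_not, this, ← SetLike.coe_subset_coe]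
    simp only [Set.Nonempty, Set.subset_def, mem_inter_iff, mem_compl_iff, not_exists, not_and]
    exact forall_congr' fun _ => not_imp_not.symm
  have hC : IsIrreducible ((D : Set X)ᶜ) := by
    refine ⟨by simpa using (hkey ⊤).1 ((hinf ∅).2 (by simp)), fun u v hu hv hCu hCv => ?_⟩
    have huv := (hinf ({⟨u, hu⟩, ⟨v, hv⟩} : Finset (Opens X))).2
      (by simp [(hkey ⟨u, hu⟩).2 hCu, (hkey ⟨v, hv⟩).2 hCv])
    simpa using (hkey _).1 huv
  obtain ⟨z, hz⟩ := QuasiSober.sober hC D.isOpen.isClosed_compl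
  exact ⟨z, funext fun U => propext ((hz.mem_open_set_iff U.isOpen).trans (hkey U).symm)⟩

theorem range_productOfMemOpens [QuasiSober X] :
    range (productOfMemOpens X) = framePoints (Opens X) :=
  (range_subset_iff.2 (productOfMemOpens_mem_framePoints X)).antisymm
    fun _ hF => exists_productOfMemOpens_eq X hF

noncomputable def homeomorphFramePoints [T0Space X] [QuasiSober X] :
    X ≃ₜ framePoints (Opens X) :=
  (productOfMemOpens_isEmbedding X).toHomeomorph.trans
    (Homeomorph.setCongr (range_productOfMemOpens X))

end SoberAsFramePoints

namespace IsReflection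

variable {K : SpaceClass} {X Xk : Type} [tX : TopologicalSpace X] [tk : TopologicalSpace Xk]
  {μ : X → Xk}

theorem exists_lift (hR : IsReflection K tX tk μ) {Z : Type} [tZ : TopologicalSpace Z]
    (hZ : K Z tZ) {f : X → Z} (hf : Continuous f) : ∃ g : Xk → Z, Continuous g ∧ g ∘ μ = f :=
  (hR.2.2 Z tZ hZ f hf).exists

theorem hom_ext (hR : IsReflection K tX tk μ) {Z : Type} [tZ : TopologicalSpace Z]
    (hZ : K Z tZ) {g₁ g₂ : Xk → Z} (hg₁ : Continuous g₁) (hg₂ : Continuous g₂)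
    (h : g₁ ∘ μ = g₂ ∘ μ) : g₁ = g₂ :=
  (hR.2.2 Z tZ hZ _ (hg₂.comp hR.2.1)).unique ⟨hg₁, h⟩ ⟨hg₂, rfl⟩

theorem mem_of_retraction (hHomeo : ClosedUnderHomeo K) (hR : IsReflection K tX tk μ)
    {s : Xk → X} (hs : Continuous s) (hsμ : s ∘ μ = id) : K X tX := by
  have hμs : μ ∘ s = id :=
    hR.hom_ext hR.1 (hR.2.1.comp hs) continuous_id (by rw [Function.comp_assoc, hsμ]; rfl)
  exact hHomeo Xk X tk tX hR.1 ⟨⟨⟨s, μ, congrFun hμs, congrFun hsμ⟩, hs, hR.2.1⟩⟩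

end IsReflection

namespace IsReflective

variable {K : SpaceClass}

theorem mem_of_retract (hHomeo : ClosedUnderHomeo K) (hRefl : IsReflective K) {A X : Type}
    [tA : TopologicalSpace A] [tX : TopologicalSpace X] [T0Space X] (hX : K X tX) {i : A → X}
    {r : X → A} (hi : Continuous i) (hr : Continuous r) (hri : r ∘ i = id) : K A tA := by
  have : T0Space A :=
    t0Space_of_injective_of_continuous (Function.LeftInverse.injective (g := r) (congrFun hri)) hi
  obtain ⟨Ak, tk, μ, hR⟩ := hRefl A tA this
  obtain ⟨h, hh, hhμ⟩ := hR.exists_lift hX hi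
  exact hR.mem_of_retraction hHomeo (hr.comp hh) (by rw [Function.comp_assoc, hhμ, hri])

theorem prop_mem (hT0 : AllT0 K) (hHomeo : ClosedUnderHomeo K) (hRefl : IsReflective K)
    (hNotT1 : NotSubT1 K) : K Prop inferInstance := by
  obtain ⟨A, tA, hA, hnT1⟩ := hNotT1
  have := hT0 A tA hA
  obtain ⟨x, y, hxy, hne⟩ : ∃ x y : A, x ⤳ y ∧ x ≠ y := by
    simpa [t1Space_iff_specializes_imp_eq] using hnT1
  classical
  refine mem_of_retract hHomeo hRefl hA (continuous_ite_of_specializes hxy)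
    (continuous_Prop.2 isClosed_closure.isOpen_compl : Continuous (· ∉ closure {y})) ?_
  funext p
  by_cases hp : p
  · simpa [hp] using fun hyx => hne (hxy.antisymm (specializes_iff_mem_closure.2 hyx)).eq
  · simp [hp, subset_closure (mem_singleton y)]

theorem productive (hT0 : AllT0 K) (hHomeo : ClosedUnderHomeo K) (hRefl : IsReflective K) :
    Productive K := by
  intro I X t hK
  have := fun i => hT0 _ _ (hK i)
  obtain ⟨Pk, tk, μ, hR⟩ := hRefl (∀ i, X i) _ inferInstance
  choose g hg hgμ using fun i => hR.exists_lift (hK i) (continuous_apply i)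
  exact hR.mem_of_retraction hHomeo (continuous_pi hg)
    (funext fun p => funext fun i => congrFun (hgμ i) p)

theorem subtype_mem_of_forall_lift_mem (hHomeo : ClosedUnderHomeo K) (hRefl : IsReflective K)
    {Z : Type} [tZ : TopologicalSpace Z] [T0Space Z] (hZ : K Z tZ) {A : Set Z}
    (hA : ∀ (Ak : Type) (tk : TopologicalSpace Ak) (μ : A → Ak), IsReflection K (subTop tZ A) tk μ →
      ∀ g : Ak → Z, Continuous g → g ∘ μ = Subtype.val → ∀ q, g q ∈ A) :
    K A (subTop tZ A) := by
  obtain ⟨Ak, tk, μ, hR⟩ := hRefl A (subTop tZ A) Subtype.t0Space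
  obtain ⟨g, hg, hgμ⟩ := hR.exists_lift hZ continuous_subtype_val
  exact hR.mem_of_retraction hHomeo (hg.codRestrict (hA Ak tk μ hR g hg hgμ))
    (funext fun a => Subtype.ext (congrFun hgμ a))

theorem hasEqualizers (hT0 : AllT0 K) (hHomeo : ClosedUnderHomeo K) (hRefl : IsReflective K) :
    HasEqualizers K := by
  intro X Y tX tY hX hY f g hf hg
  have := hT0 X tX hX
  refine subtype_mem_of_forall_lift_mem hHomeo hRefl hX fun Ek tk μ hR h hh hhμ q => ?_
  have hfg : f ∘ h = g ∘ h := hR.hom_ext hY (hf.comp hh) (hg.comp hh) (by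
    rw [Function.comp_assoc, hhμ, Function.comp_assoc, hhμ]
    exact funext fun e => e.2)
  exact congrFun hfg q

theorem iInter_mem (hHomeo : ClosedUnderHomeo K) (hRefl : IsReflective K) {Z : Type}
    [tZ : TopologicalSpace Z] [T0Space Z] (hZ : K Z tZ) {I : Type} {Xi : I → Set Z}
    (hXi : ∀ i, K (Xi i) (subTop tZ (Xi i))) : K (⋂ i, Xi i) (subTop tZ (⋂ i, Xi i)) := by
  refine subtype_mem_of_forall_lift_mem hHomeo hRefl hZ
    fun Ak tk μ hR h hh hhμ q => mem_iInter.2 fun i => ?_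
  obtain ⟨g, hg, hgμ⟩ := hR.exists_lift (hXi i) (continuous_inclusion (iInter_subset Xi i))
  have hgh : Subtype.val ∘ g = h :=
    hR.hom_ext hZ (continuous_subtype_val.comp hg) hh (by rw [Function.comp_assoc, hgμ, hhμ]; rfl)
  exact hgh ▸ (g q).2

theorem preimage_mem (hHomeo : ClosedUnderHomeo K) (hRefl : IsReflective K) {X Y : Type}
    [tX : TopologicalSpace X] [tY : TopologicalSpace Y] [T0Space X] (hX : K X tX) (hY : K Y tY)
    {f : X → Y} (hf : Continuous f) {Y₁ : Set Y} (hY₁ : K Y₁ (subTop tY Y₁)) :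
    K (f ⁻¹' Y₁) (subTop tX (f ⁻¹' Y₁)) := by
  refine subtype_mem_of_forall_lift_mem hHomeo hRefl hX fun Pk tk μ hR h hh hhμ q => ?_
  obtain ⟨g, hg, hgμ⟩ := hR.exists_lift hY₁
    ((hf.comp continuous_subtype_val).codRestrict fun p : f ⁻¹' Y₁ => p.2)
  have hgh : Subtype.val ∘ g = f ∘ h := hR.hom_ext hY (continuous_subtype_val.comp hg)
    (hf.comp hh) (by rw [Function.comp_assoc, hgμ, Function.comp_assoc, hhμ]; rfl)
  have hq := (g q).2
  rwa [show (g q : Y) = f (h q) from congrFun hgh q] at hq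

theorem sober_mem (hT0 : AllT0 K) (hHomeo : ClosedUnderHomeo K) (hRefl : IsReflective K)
    (hNotT1 : NotSubT1 K) {X : Type} [tX : TopologicalSpace X] [T0Space X] [QuasiSober X] :
    K X tX := by
  have hPow : ∀ ι : Type, K (ι → Prop) inferInstance := fun ι =>
    productive hT0 hHomeo hRefl ι _ _ fun _ => prop_mem hT0 hHomeo hRefl hNotT1
  have hE : K (framePoints (Opens X)) (subTop inferInstance (framePoints (Opens X))) :=
    hasEqualizers hT0 hHomeo hRefl _ _ _ _ (hPow _) (hPow _) _ _
      (continuous_applyInfSup (Opens X)) (continuous_infSupApply (Opens X))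
  exact hHomeo _ X _ tX hE ⟨(homeomorphFramePoints X).symm⟩

end IsReflective

section BTopology

variable {P : Type} [tP : TopologicalSpace P]

theorem isOpen_bTop_inter_closure {U : Set P} (hU : IsOpen U) {x : P} (hx : x ∈ U) :
    IsOpen[bTop P tP] (U ∩ closure {x}) :=
  isOpen_generateFrom_of_mem ⟨U, x, hU, hx, rfl⟩

theorem isTopologicalBasis_bTop : @IsTopologicalBasis P (bTop P tP)
    {s | ∃ (U : Set P) (x : P), IsOpen U ∧ x ∈ U ∧ s = U ∩ closure {x}} := by
  refine @IsTopologicalBasis.mk _ (bTop P tP) _ ?_ ?_ rfl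
  · rintro _ ⟨U, x, hU, -, rfl⟩ _ ⟨V, y, hV, -, rfl⟩ z ⟨⟨hzU, hzx⟩, hzV, hzy⟩
    refine ⟨(U ∩ V) ∩ closure {z}, ⟨U ∩ V, z, hU.inter hV, ⟨hzU, hzV⟩, rfl⟩,
      ⟨⟨hzU, hzV⟩, subset_closure rfl⟩, ?_⟩
    rintro w ⟨⟨hwU, hwV⟩, hwz⟩
    exact ⟨⟨hwU, (specializes_iff_mem_closure.2 hzx).closure_subset hwz⟩,
      hwV, (specializes_iff_mem_closure.2 hzy).closure_subset hwz⟩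
  · exact sUnion_eq_univ_iff.2 fun z =>
      ⟨univ ∩ closure {z}, ⟨univ, z, isOpen_univ, trivial, rfl⟩, trivial, subset_closure rfl⟩

theorem quasiSober_of_isClosed_bTop [QuasiSober P] {A : Set P} (hA : IsClosed[bTop P tP] A) :
    QuasiSober A := by
  refine ⟨fun {C} hC hCc => ?_⟩
  obtain ⟨z, hz⟩ := QuasiSober.sober
    (hC.image _ continuous_subtype_val.continuousOn).closure isClosed_closure
  have hzA : z ∈ A := by
    by_contra hzA
    obtain ⟨_, ⟨U, x, hU, -, rfl⟩, ⟨hzU, hzx⟩, hUA⟩ :=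
      (@IsTopologicalBasis.isOpen_iff _ (bTop P tP) _ _ isTopologicalBasis_bTop).1
        hA.isOpen_compl z hzA
    obtain ⟨_, hcU, c, hcC, rfl⟩ := mem_closure_iff.1 hz.mem U hU hzU
    have hxc : x ⤳ c := (specializes_iff_mem_closure.2 hzx).trans
      (hz.specializes (subset_closure (mem_image_of_mem _ hcC)))
    exact hUA ⟨hcU, specializes_iff_mem_closure.1 hxc⟩ c.2
  refine ⟨⟨z, hzA⟩, isGenericPoint_iff_specializes.2 fun y => ?_⟩
  rw [subtype_specializes_iff, hz.specializes_iff_mem, ← closure_subtype, hCc.closure_eq]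

theorem eq_of_eqOn_of_forall_mem_bClosure {Z : Type*} [TopologicalSpace Z] [T0Space Z]
    {Y : Set P} {D : Set Y} (hD : ∀ y : Y, (y : P) ∈ closure[bTop P tP] (Subtype.val '' D))
    {g₁ g₂ : Y → Z} (hg₁ : Continuous g₁) (hg₂ : Continuous g₂) (h : EqOn g₁ g₂ D) :
    g₁ = g₂ := by
  have key : ∀ {g₁ g₂ : Y → Z}, Continuous g₁ → Continuous g₂ → EqOn g₁ g₂ D →
      ∀ y, g₂ y ⤳ g₁ y := by
    intro g₁ g₂ hg₁ hg₂ h y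
    refine specializes_iff_forall_open.2 fun s hs hys => ?_
    obtain ⟨W, hW, hWs⟩ := isOpen_induced_iff.1 (hs.preimage hg₁)
    have hyW : (y : P) ∈ W := by rw [← mem_preimage, hWs]; exact hys
    obtain ⟨_, ⟨hdW, hdy⟩, d, hd, rfl⟩ :=
      (@mem_closure_iff _ (bTop P tP) _ _).1 (hD y) _ (isOpen_bTop_inter_closure hW hyW)
        ⟨hyW, subset_closure rfl⟩
    have hyd : y ⤳ d := (subtype_specializes_iff _ _).2 (specializes_iff_mem_closure.2 hdy)
    have hds : g₁ d ∈ s := by rw [← mem_preimage, ← hWs]; exact hdW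
    exact specializes_iff_forall_open.1 (hyd.map hg₂) s hs (h hd ▸ hds)
  exact funext fun y => ((key hg₂ hg₁ h.symm y).antisymm (key hg₁ hg₂ h y)).eq

end BTopology

-- The Keimel–Lawson conditions (K1), (K3) and (K4).

def ContainsSober (K : SpaceClass) : Prop :=
  ∀ (X : Type) (tX : TopologicalSpace X), Sober X tX → K X tX

def InterClosedInSober (K : SpaceClass) : Prop :=
  ∀ (Z : Type) (tZ : TopologicalSpace Z), Sober Z tZ →
    ∀ (I : Type) (Xi : I → Set Z), (∀ i, K (Xi i) (subTop tZ (Xi i))) →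
      K (⋂ i, Xi i) (subTop tZ (⋂ i, Xi i))

def PreimageClosedInSober (K : SpaceClass) : Prop :=
  ∀ (X Y : Type) (tX : TopologicalSpace X) (tY : TopologicalSpace Y),
    Sober X tX → Sober Y tY →
    ∀ f : X → Y, @Continuous X Y tX tY f →
      ∀ Y₁ : Set Y, K Y₁ (subTop tY Y₁) → K (f ⁻¹' Y₁) (subTop tX (f ⁻¹' Y₁))

namespace IsReflective

variable {K : SpaceClass}

theorem containsSober (hT0 : AllT0 K) (hHomeo : ClosedUnderHomeo K) (hRefl : IsReflective K)
    (hNotT1 : NotSubT1 K) : ContainsSober K :=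
  fun _ _ ⟨_, _⟩ => sober_mem hT0 hHomeo hRefl hNotT1

theorem interClosedInSober (hT0 : AllT0 K) (hHomeo : ClosedUnderHomeo K)
    (hRefl : IsReflective K) (hNotT1 : NotSubT1 K) : InterClosedInSober K :=
  fun Z tZ hZ _ _ hXi =>
    have := hZ.1
    iInter_mem hHomeo hRefl (containsSober hT0 hHomeo hRefl hNotT1 Z tZ hZ) hXi

theorem preimageClosedInSober (hT0 : AllT0 K) (hHomeo : ClosedUnderHomeo K)
    (hRefl : IsReflective K) (hNotT1 : NotSubT1 K) : PreimageClosedInSober K :=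
  fun X Y tX tY hX hY _ hf _ hY₁ =>
    have := hX.1
    preimage_mem hHomeo hRefl (containsSober hT0 hHomeo hRefl hNotT1 X tX hX)
      (containsSober hT0 hHomeo hRefl hNotT1 Y tY hY) hf hY₁

end IsReflective

section ReflectionHull

variable (K : SpaceClass) (X : Type) [TopologicalSpace X]

/-- The paper's `X^k`, with the sober Sierpiński power `Opens X → Prop` in place of the
sobrification of `X`. -/
def reflectionHull : Set (Opens X → Prop) :=
  ⋂ A : {A : Set (Opens X → Prop) //
    range (productOfMemOpens X) ⊆ A ∧ K A (subTop inferInstance A)}, A.1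

theorem range_subset_reflectionHull : range (productOfMemOpens X) ⊆ reflectionHull K X :=
  subset_iInter fun A => A.2.1

def toReflectionHull : X → reflectionHull K X :=
  codRestrict (productOfMemOpens X) _ fun x => range_subset_reflectionHull K X (mem_range_self x)

variable {K X}

theorem reflectionHull_subset {A : Set (Opens X → Prop)}
    (hXA : range (productOfMemOpens X) ⊆ A) (hA : K A (subTop inferInstance A)) :
    reflectionHull K X ⊆ A :=
  iInter_subset_of_subset ⟨A, hXA, hA⟩ subset_rfl

theorem reflectionHull_mem (hK3 : InterClosedInSober K) :
    K (reflectionHull K X) (subTop inferInstance (reflectionHull K X)) :=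
  hK3 _ _ (sober_pi_prop _) _ _ fun A => A.2.2

theorem reflectionHull_subset_bClosure (hK1 : ContainsSober K) :
    reflectionHull K X ⊆ closure[bTop _ inferInstance] (range (productOfMemOpens X)) :=
  reflectionHull_subset (@subset_closure _ (bTop _ inferInstance) _)
    (hK1 _ _ ⟨Subtype.t0Space, quasiSober_of_isClosed_bTop (@isClosed_closure _ (bTop _ _) _)⟩)

theorem exists_lift_toReflectionHull (hHomeo : ClosedUnderHomeo K)
    (hK4 : PreimageClosedInSober K) {Z : Type} [tZ : TopologicalSpace Z] [T0Space Z]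
    (hZ : K Z tZ) {f : X → Z} (hf : Continuous f) :
    ∃ g : reflectionHull K X → Z, Continuous g ∧ g ∘ toReflectionHull K X = f := by
  set φ : (Opens X → Prop) → (Opens Z → Prop) := fun F V => F (Opens.comap ⟨f, hf⟩ V)
  have hφ : Continuous φ := continuous_pi fun V => continuous_apply _
  have hφe : ∀ x, φ (productOfMemOpens X x) = productOfMemOpens Z (f x) := fun x => rfl
  set eZ := (productOfMemOpens_isEmbedding Z).toHomeomorph
  have hB : K (φ ⁻¹' range (productOfMemOpens Z)) (subTop inferInstance _) :=
    hK4 _ _ _ _ (sober_pi_prop _) (sober_pi_prop _) φ hφ _ (hHomeo Z _ tZ _ hZ ⟨eZ⟩)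
  have hsub : reflectionHull K X ⊆ φ ⁻¹' range (productOfMemOpens Z) :=
    reflectionHull_subset (range_subset_iff.2 fun x => ⟨f x, (hφe x).symm⟩) hB
  refine ⟨fun c => eZ.symm ⟨φ c, hsub c.2⟩,
    eZ.symm.continuous.comp ((hφ.comp continuous_subtype_val).codRestrict _), funext fun x => ?_⟩
  exact (productOfMemOpens_isEmbedding Z).toHomeomorph_symm_apply (f x)

theorem isReflection_toReflectionHull (hT0 : AllT0 K) (hHomeo : ClosedUnderHomeo K)
    (hK1 : ContainsSober K) (hK3 : InterClosedInSober K) (hK4 : PreimageClosedInSober K) :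
    IsReflection K inferInstance (subTop inferInstance (reflectionHull K X))
      (toReflectionHull K X) := by
  refine ⟨reflectionHull_mem hK3, (productOfMemOpens X).continuous.codRestrict _,
    fun Z tZ hZ f hf => ?_⟩
  have := hT0 Z tZ hZ
  obtain ⟨g, hg, hgμ⟩ := exists_lift_toReflectionHull hHomeo hK4 hZ hf
  refine ⟨g, ⟨hg, hgμ⟩, fun g' ⟨hg', hg'μ⟩ =>
    eq_of_eqOn_of_forall_mem_bClosure (D := range (toReflectionHull K X)) (fun c => ?_) hg' hg ?_⟩
  · rw [← range_comp]
    exact reflectionHull_subset_bClosure hK1 c.2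
  · rintro _ ⟨x, rfl⟩
    exact (congrFun hg'μ x).trans (congrFun hgμ x).symm

end ReflectionHull

theorem IsReflective.of_keimelLawson {K : SpaceClass} (hT0 : AllT0 K)
    (hHomeo : ClosedUnderHomeo K) (hK1 : ContainsSober K) (hK3 : InterClosedInSober K)
    (hK4 : PreimageClosedInSober K) : IsReflective K :=
  fun _ _ _ => ⟨_, _, _, isReflection_toReflectionHull hT0 hHomeo hK1 hK3 hK4⟩

/-- a full subcategory `K` of Top₀ closed under homeomorphisms containing a
non-T₁ space is reflective iff it satisfies the Keimel–Lawson conditions (K1), (K3), (K4). -/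
theorem statement15 (K : SpaceClass) (hT0 : AllT0 K) (hHomeo : ClosedUnderHomeo K)
    (hNotT1 : NotSubT1 K) :
    IsReflective K ↔
      ((∀ (X : Type) (tX : TopologicalSpace X), Sober X tX → K X tX) ∧
       (∀ (Z : Type) (tZ : TopologicalSpace Z), Sober Z tZ →
          ∀ (I : Type) (Xi : I → Set Z), (∀ i, K (Xi i) (subTop tZ (Xi i))) →
            K (⋂ i, Xi i) (subTop tZ (⋂ i, Xi i))) ∧
       (∀ (X Y : Type) (tX : TopologicalSpace X) (tY : TopologicalSpace Y),
          Sober X tX → Sober Y tY →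
          ∀ f : X → Y, @Continuous X Y tX tY f →
            ∀ Y₁ : Set Y, K Y₁ (subTop tY Y₁) → K (f ⁻¹' Y₁) (subTop tX (f ⁻¹' Y₁)))) :=
  ⟨fun hRefl => ⟨hRefl.containsSober hT0 hHomeo hNotT1,
      hRefl.interClosedInSober hT0 hHomeo hNotT1, hRefl.preimageClosedInSober hT0 hHomeo hNotT1⟩,
    fun ⟨hK1, hK3, hK4⟩ => .of_keimelLawson hT0 hHomeo hK1 hK3 hK4⟩
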